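/- arXiv:1909.01849 — 2 statements merged into one kernel-verified Lean document; each statement's English description precedes it below -/
import Mathlib

section
/- Let G be a torsion-free abelian group and A = (a_1,...,a_q) a q-tuple of elements of G. Suppose A has the property (P_{r,s}) for some integers r,s with q ≥ r > s > 1, meaning: for any r indices l(1),...,l(r) in {1,...,q} and any choice of s positions i_1 < ... < i_s among them, there is a different choice of s positions j_1 < ... < j_s such that a_{l(i_1)}···a_{l(i_s)} = a_{l(j_1)}···a_{l(j_s)}. Then there exist q−r+2 indices i_1 < ... < i_{q−r+2} with a_{i_1} = a_{i_2} = ... = a_{i_{q−r+2}}. -/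
/-!
In a linearly ordered cancellative monoid the `s` smallest entries of a selection have the
strictly smallest `s`-fold product, so property `(P_{r,s})` forces the order statistic `v` of
rank `s` to have fewer than `r - s` entries above it; as at most `s - 1` entries lie below it,
at least `q - r + 2` entries equal `v`. A torsion-free abelian group reduces to this case:
the subgroup generated by the entries is free of finite rank, hence embeds into the
lexicographically ordered group `ℤⁿ`.
-/

open Finset Function

section

variable {ι M N : Type*}

/-- Property `(P_{r,s})`, phrased with a set `R` of `r` indices in place of an injective
selection `l`. -/
def PropertyP [CommMonoid M] (r s : ℕ) (a : ι → M) : Prop :=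
  ∀ R : Finset ι, #R = r → ∀ I ⊆ R, #I = s →
    ∃ J ⊆ R, #J = s ∧ J ≠ I ∧ ∏ i ∈ I, a i = ∏ j ∈ J, a j

namespace PropertyP

variable [CommMonoid M] [CommMonoid N] {r s : ℕ} {a : ι → M}

theorem of_forall_injective
    (h : ∀ l : Fin r → ι, Injective l → ∀ I : Finset (Fin r), #I = s →
      ∃ J : Finset (Fin r), #J = s ∧ J ≠ I ∧ ∏ i ∈ I, a (l i) = ∏ j ∈ J, a (l j)) :
    PropertyP r s a := by
  intro R hR I hIR hI
  let e : Fin r ↪ ι := (R.equivFinOfCardEq hR).symm.toEmbedding.trans (Embedding.subtype _)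
  have hRe : univ.map e = R := by simp [e, ← map_map, attach_map_val]
  obtain ⟨I, -, rfl⟩ := subset_map_iff.mp (hRe ▸ hIR)
  obtain ⟨J, hJ, hne, heq⟩ := h e e.injective I (by simpa using hI)
  refine ⟨J.map e, hRe ▸ map_subset_map.mpr (subset_univ J), by simpa using hJ,
    fun h ↦ hne (map_injective e h), ?_⟩
  simpa only [prod_map] using heq

theorem comp (hP : PropertyP r s a) (φ : M →* N) : PropertyP r s (φ ∘ a) := by
  intro R hR I hIR hI
  obtain ⟨J, hJR, hJ, hne, heq⟩ := hP R hR I hIR hI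
  exact ⟨J, hJR, hJ, hne, by simp only [comp_apply, ← map_prod, heq]⟩

theorem of_comp {φ : M →* N} (hφ : Injective φ) (hP : PropertyP r s (φ ∘ a)) :
    PropertyP r s a := by
  intro R hR I hIR hI
  obtain ⟨J, hJR, hJ, hne, heq⟩ := hP R hR I hIR hI
  exact ⟨J, hJR, hJ, hne, hφ (by simpa only [comp_apply, ← map_prod] using heq)⟩

end PropertyP

theorem Finset.prod_lt_prod_of_card_eq [CommMonoid M] [PartialOrder M]
    [IsOrderedCancelMonoid M] [DecidableEq ι] {I J : Finset ι} (hIJ : #I = #J) (hne : J ≠ I)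
    {f : ι → M} {v : M} (hI : ∀ i ∈ I, f i ≤ v) (hJ : ∀ j ∈ J \ I, v < f j) :
    ∏ i ∈ I, f i < ∏ j ∈ J, f j := by
  have hJI : (J \ I).Nonempty := sdiff_nonempty.mpr fun h ↦ hne (eq_of_subset_of_card_le h hIJ.le)
  have hle : ∏ i ∈ I \ J, f i ≤ v ^ #(I \ J) :=
    prod_le_pow_card _ _ _ fun i hi ↦ hI i (mem_sdiff.mp hi).1
  have hlt : v ^ #(J \ I) < ∏ j ∈ J \ I, f j := by
    simpa using prod_lt_prod_of_nonempty' (f := fun _ ↦ v) hJI hJ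
  rw [← prod_inter_mul_prod_sdiff I J, ← prod_inter_mul_prod_sdiff J I, inter_comm J I]
  exact mul_lt_mul_right (hle.trans_lt (card_sdiff_comm hIJ ▸ hlt)) _

theorem Fintype.exists_card_filter_lt_lt_le_card_filter_le [Fintype ι] [LinearOrder M]
    (f : ι → M) {s : ℕ} (hs : 0 < s) (hsι : s ≤ Fintype.card ι) :
    ∃ v, #{i | f i < v} < s ∧ s ≤ #{i | f i ≤ v} := by
  have hV : ({i | s ≤ #{j | f j ≤ f i}} : Finset ι).Nonempty := by
    obtain ⟨i, -, hi⟩ := exists_max_image univ f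
      (univ_nonempty_iff.mpr (Fintype.card_pos_iff.mp (hs.trans_le hsι)))
    refine ⟨i, mem_filter.mpr ⟨mem_univ i, ?_⟩⟩
    simpa [filter_true_of_mem fun j _ ↦ hi j (mem_univ j)] using hsι
  obtain ⟨i₀, hi₀, hmin⟩ := exists_min_image _ f hV
  refine ⟨f i₀, not_le.mp fun hlt ↦ ?_, (mem_filter.mp hi₀).2⟩
  obtain ⟨k, hk, hmax⟩ :=
    exists_max_image {i | f i < f i₀} f (Finset.card_pos.mp (hs.trans_le hlt))
  have hkV : k ∈ ({i | s ≤ #{j | f j ≤ f i}} : Finset ι) :=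
    mem_filter.mpr ⟨mem_univ k, hlt.trans (card_le_card fun j hj ↦ mem_filter.mpr
      ⟨mem_univ j, hmax j hj⟩)⟩
  exact (hmin k hkV).not_gt (mem_filter.mp hk).2

theorem PropertyP.exists_le_card_fiber [Fintype ι] [DecidableEq ι] [CommMonoid M] [LinearOrder M]
    [IsOrderedCancelMonoid M] {r s : ℕ} {a : ι → M} (hP : PropertyP r s a) (hs : 0 < s)
    (hsr : s ≤ r) (hr : r ≤ Fintype.card ι) :
    ∃ v, Fintype.card ι - r + 2 ≤ #{i | a i = v} := by
  obtain ⟨v, hlt, hle⟩ := Fintype.exists_card_filter_lt_lt_le_card_filter_le a hs (hsr.trans hr)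
  have hgt : #{i | v < a i} < r - s := by
    by_contra! hbig
    obtain ⟨I, -, hIle, hI⟩ := exists_subsuperset_card_eq
      (monotone_filter_right _ fun _ _ ↦ le_of_lt) hlt.le hle
    obtain ⟨K, hK, hKcard⟩ := exists_subset_card_eq hbig
    have hIK : Disjoint I K := disjoint_left.mpr fun i hiI hiK ↦
      ((mem_filter.mp (hIle hiI)).2.not_gt (mem_filter.mp (hK hiK)).2)
    obtain ⟨J, hJR, hJ, hne, heq⟩ := hP (I ∪ K) (by rw [card_union_of_disjoint hIK]; omega) I
      subset_union_left hI
    refine (prod_lt_prod_of_card_eq (hI.trans hJ.symm) hne (v := v)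
      (fun i hi ↦ (mem_filter.mp (hIle hi)).2) fun j hj ↦ ?_).ne heq
    obtain ⟨hjR, hjI⟩ := mem_sdiff.mp hj
    exact (mem_filter.mp (hK ((mem_union.mp (hJR hjR)).resolve_left hjI))).2
  have hcount : Fintype.card ι ≤ #{i | a i < v} + #{i | a i = v} + #{i | v < a i} := by
    have hsplit := card_filter_add_card_filter_not (s := univ) (a · ≤ v)
    simp only [not_le, card_univ] at hsplit
    have hle_split : #{i | a i ≤ v} ≤ #{i | a i < v} + #{i | a i = v} :=
      (card_le_card fun i hi ↦ by simpa [le_iff_lt_or_eq] using hi).trans (card_union_le _ _)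
    omega
  exact ⟨v, by omega⟩

end

theorem CommGroup.exists_injective_monoidHom_lex (H : Type*) [CommGroup H] [Group.FG H]
    [IsMulTorsionFree H] :
    ∃ n, ∃ ψ : H →* Multiplicative (Lex (Fin n →₀ ℤ)), Injective ψ :=
  let e := (Module.finBasis ℤ (Additive H)).repr.toAddEquiv.trans (toLexAddEquiv _)
  ⟨_, AddMonoidHom.toMultiplicative e.toAddMonoidHom, e.injective⟩

/-- Fujimoto's lemma: a torsion-free abelian group tuple with property `(P_{r,s})`
has `q - r + 2` equal elements. -/
theorem stmt_0 (G : Type*) [CommGroup G] (hG : ∀ g : G, g ≠ 1 → ¬IsOfFinOrder g)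
    (q r s : ℕ) (hqr : r ≤ q) (hrs : s < r) (hs : 1 < s)
    (a : Fin q → G)
    (hP : ∀ l : Fin r → Fin q, Function.Injective l →
      ∀ I : Finset (Fin r), I.card = s →
        ∃ J : Finset (Fin r), J.card = s ∧ J ≠ I ∧
          ∏ i ∈ I, a (l i) = ∏ j ∈ J, a (l j)) :
    ∃ T : Finset (Fin q), T.card = q - r + 2 ∧
      ∀ i ∈ T, ∀ j ∈ T, a i = a j := by
  have : IsMulTorsionFree G := .of_not_isOfFinOrder hG
  let H := Subgroup.closure (Set.range a)
  let b : Fin q → H := fun i ↦ ⟨a i, Subgroup.subset_closure ⟨i, rfl⟩⟩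
  have : Group.FG H := Group.closure_finite_fg _
  obtain ⟨n, ψ, hψ⟩ := CommGroup.exists_injective_monoidHom_lex H
  have hPb : PropertyP r s (ψ ∘ b) :=
    ((PropertyP.of_forall_injective hP).of_comp (φ := H.subtype) Subtype.val_injective).comp ψ
  obtain ⟨v, hv⟩ := hPb.exists_le_card_fiber (by omega) hrs.le (by simpa using hqr)
  obtain ⟨T, hT, hTcard⟩ := exists_subset_card_eq (by simpa using hv)
  refine ⟨T, hTcard, fun i hi j hj ↦ congrArg Subtype.val (@hψ (b i) (b j) ?_)⟩
  exact (mem_filter.mp (hT hi)).2.trans (mem_filter.mp (hT hj)).2.symm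
end

section
/- Let F, G, H be nonzero meromorphic functions on an open ball B in ℂ^m. Define for each multi-index α the Cartan auxiliary function Φ^α(F,G,H) = F·G·H · det of the 3×3 matrix with rows (1,1,1), (1/F, 1/G, 1/H), (D^α(1/F), D^α(1/G), D^α(1/H)), where D^α denotes the partial derivative of order α. If Φ^α(F,G,H) ≡ 0 and Φ^α(1/F,1/G,1/H) ≡ 0 for all multi-indices α with |α| ≤ 1, then either (i) F = G, or G = H, or H = F; or (ii) F/G, G/H and H/F are all constant. -/
/-!
Expanding the determinant, `Φ^α(1/F,1/G,1/H) = 0` for `|α| = 1` says that `G - F` and `H - F`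
have vanishing Wronskians, so `H - F = c (G - F)` for a constant `c`; likewise
`H⁻¹ - F⁻¹ = c' (G⁻¹ - F⁻¹)`. Eliminating `F` gives `c G = c' H` and `(1 - c') H = (1 - c) F`,
and distinctness of `F, G, H` keeps `c` and `1 - c'` nonzero.
-/

universe u v w

theorem det_cartan_eq_wronskian {R : Type u} {A : Type v} [CommRing R] [CommRing A] [Algebra R A]
    (D : Derivation R A A) (x y z : A) :
    Matrix.det !![1, 1, 1; x, y, z; D x, D y, D z] = (y - x) * D (z - x) - (z - x) * D (y - x) := by
  simp only [Matrix.det_fin_three, Matrix.of_apply, Matrix.cons_val', Matrix.cons_val_zero,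
    Matrix.cons_val_one, Matrix.cons_val_two, Matrix.empty_val', Matrix.cons_val_fin_one,
    Matrix.tail_cons, Matrix.vecHead, map_sub]
  ring

section

variable {ι : Type u} {k : Type v} {K : Type w} [Field k] [Field K] [Algebra k K]

theorem exists_eq_algebraMap_mul_of_wronskian_eq_zero (D : ι → Derivation k K K)
    (hconst : ∀ x : K, (∀ i, D i x = 0) → ∃ c : k, x = algebraMap k K c)
    {a b : K} (ha : a ≠ 0) (h : ∀ i, a * D i b - b * D i a = 0) :
    ∃ c : k, b = algebraMap k K c * a := by
  obtain ⟨c, hc⟩ := hconst (b / a) fun i => by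
    rw [Derivation.leibniz_div, smul_eq_mul, smul_eq_mul, smul_eq_mul, h i, mul_zero]
  exact ⟨c, by rw [← hc, div_mul_cancel₀ b ha]⟩

theorem exists_sub_eq_algebraMap_mul_sub_of_det_eq_zero (D : ι → Derivation k K K)
    (hconst : ∀ x : K, (∀ i, D i x = 0) → ∃ c : k, x = algebraMap k K c)
    {x y z : K} (hxy : x ≠ y) (h : ∀ i, Matrix.det !![1, 1, 1; x, y, z; D i x, D i y, D i z] = 0) :
    ∃ c : k, z - x = algebraMap k K c * (y - x) :=
  exists_eq_algebraMap_mul_of_wronskian_eq_zero D hconst (sub_ne_zero.mpr hxy.symm) fun i => by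
    rw [← det_cartan_eq_wronskian, h i]

theorem div_eq_algebraMap_div_of_algebraMap_mul_eq {x y : K} {a b : k} (ha : a ≠ 0) (hy : y ≠ 0)
    (h : algebraMap k K a * x = algebraMap k K b * y) : x / y = algebraMap k K (b / a) := by
  have ha' : algebraMap k K a ≠ 0 := (map_ne_zero _).mpr ha
  rw [map_div₀, div_eq_div_iff hy ha']
  linear_combination h

theorem exists_div_eq_algebraMap_of_sub_eq_algebraMap_mul_sub {F G H : K}
    (hF : F ≠ 0) (hG : G ≠ 0) (hH : H ≠ 0) (hFG : F ≠ G) (hGH : G ≠ H) (hHF : H ≠ F)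
    {c c' : k} (hc : H - F = algebraMap k K c * (G - F))
    (hc' : H⁻¹ - F⁻¹ = algebraMap k K c' * (G⁻¹ - F⁻¹)) :
    ∃ c₁ c₂ c₃ : k, F / G = algebraMap k K c₁ ∧ G / H = algebraMap k K c₂ ∧
      H / F = algebraMap k K c₃ := by
  set A := algebraMap k K
  have hGF : G - F ≠ 0 := sub_ne_zero.mpr hFG.symm
  -- clearing denominators in `hc'` gives `G (F - H) = c' H (F - G)`, then substitute `hc`
  have key : A c * G = A c' * H := by
    refine mul_left_cancel₀ (mul_ne_zero hF hGF) ?_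
    field_simp at hc'
    linear_combination -F * hc' - F * G * hc
  have hc0 : c ≠ 0 := by
    rintro rfl
    exact hHF (by simpa [sub_eq_zero] using hc)
  have hc'1 : 1 - c' ≠ 0 := by
    intro h1
    rw [show c' = 1 by linear_combination -h1, map_one, one_mul] at key
    have hA : (A c - 1) * F = 0 := by linear_combination hc + key
    rw [sub_eq_zero.mp ((mul_eq_zero.mp hA).resolve_right hF), one_mul] at key
    exact hGH key
  have hGH' : G / H = A (c' / c) := div_eq_algebraMap_div_of_algebraMap_mul_eq hc0 hH key
  have hHF' : H / F = A ((1 - c) / (1 - c')) :=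
    div_eq_algebraMap_div_of_algebraMap_mul_eq hc'1 hF (by
      simp only [map_sub, map_one]; linear_combination hc + key)
  refine ⟨(c' / c * ((1 - c) / (1 - c')))⁻¹, _, _, ?_, hGH', hHF'⟩
  rw [map_inv₀, map_mul, ← hGH', ← hHF']
  field_simp

end

open Matrix in
/-- `K` stands for the meromorphic functions on `B` and `D k` for `∂/∂z_k`; the multi-index
`α = 0` is left out because then the last two rows of the determinant coincide. -/
theorem stmt_1 (m : ℕ) (K : Type*) [Field K] [Algebra ℂ K]
    (D : Fin m → Derivation ℂ K K)
    (hconst : ∀ x : K, (∀ k, D k x = 0) → ∃ c : ℂ, x = algebraMap ℂ K c)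
    (F G H : K) (hF : F ≠ 0) (hG : G ≠ 0) (hH : H ≠ 0)
    (hΦ : ∀ k, F * G * H *
      Matrix.det !![1, 1, 1; F⁻¹, G⁻¹, H⁻¹; D k F⁻¹, D k G⁻¹, D k H⁻¹] = 0)
    (hΦinv : ∀ k, F⁻¹ * G⁻¹ * H⁻¹ *
      Matrix.det !![1, 1, 1; F, G, H; D k F, D k G, D k H] = 0) :
    (F = G ∨ G = H ∨ H = F) ∨
      (∃ c₁ c₂ c₃ : ℂ, F / G = algebraMap ℂ K c₁ ∧ G / H = algebraMap ℂ K c₂ ∧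
        H / F = algebraMap ℂ K c₃) := by
  by_cases hFG : F = G
  · exact Or.inl (Or.inl hFG)
  by_cases hGH : G = H
  · exact Or.inl (Or.inr (Or.inl hGH))
  by_cases hHF : H = F
  · exact Or.inl (Or.inr (Or.inr hHF))
  obtain ⟨c, hc⟩ := exists_sub_eq_algebraMap_mul_sub_of_det_eq_zero D hconst hFG fun k =>
    (mul_eq_zero.mp (hΦinv k)).resolve_left (by simp [hF, hG, hH])
  obtain ⟨c', hc'⟩ := exists_sub_eq_algebraMap_mul_sub_of_det_eq_zero D hconst
    (inv_injective.ne hFG) fun k => (mul_eq_zero.mp (hΦ k)).resolve_left (by simp [hF, hG, hH])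
  exact Or.inr
    (exists_div_eq_algebraMap_of_sub_eq_algebraMap_mul_sub hF hG hH hFG hGH hHF hc hc')
end
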